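/- Let r_+ > 0, M > 0, a ∈ ℝ with μ(r) = (r^2 - 2Mr + a^2)/(r^2 + a^2). If φ : [r_+, ∞) → ℂ is C^1 with lim_{r→∞} r |φ(r)|^2 = 0 and the integral ∫_{r_+}^{∞} μ^2 r^2 |φ'|^2 dr is finite, then ∫_{r_+}^{∞} |φ|^2 dr ≤ C ∫_{r_+}^{∞} μ^2 r^2 |φ'|^2 dr for a constant C depending only on M and a. -/

import Mathlib

open MeasureTheory

noncomputable def rplus (M a : ℝ) : ℝ := M + Real.sqrt (M^2 - a^2)

noncomputable def muKerr (M a r : ℝ) : ℝ := (r^2 - 2*M*r + a^2) / (r^2 + a^2)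

/-!
Write `p = r_+`. Integrating `d/dr ((r - p) ‖φ‖²) = ‖φ‖² + 2 (r - p) ⟪φ, φ'⟫` over `[p, R]` and
absorbing the cross term by AM-GM gives the classical Hardy inequality
`∫_p^R ‖φ‖² ≤ 2 (R - p) ‖φ(R)‖² + 4 ∫_p^R (r - p)² ‖φ'‖²`; the boundary term vanishes as
`R → ∞` because `r ‖φ(r)‖² → 0`. Finally `Δ = (r - r_+)(r - r_-)` and
`(r - r_-) r / (r² + a²) ≥ √(M² - a²) / (4M)` for `r ≥ r_+`, so the weight `(r - r_+)²` is at most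
`(4M / √(M² - a²))² μ² r²`.
-/

open Set Filter Topology
open scoped RealInnerProductSpace

theorem tendsto_sub_mul_of_tendsto_mul {f : ℝ → ℝ} (p : ℝ)
    (hf : Tendsto (fun r => r * f r) atTop (𝓝 0)) :
    Tendsto (fun r => (r - p) * f r) atTop (𝓝 0) := by
  have hf0 : Tendsto f atTop (𝓝 0) := by
    have h : Tendsto (fun r => r * f r * r⁻¹) atTop (𝓝 0) := by
      simpa using hf.mul tendsto_inv_atTop_zero
    refine h.congr' ?_
    filter_upwards [eventually_ne_atTop 0] with r hr
    field_simp
  simpa using (hf.sub (hf0.const_mul p)).congr fun r => by ring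

theorem setIntegral_Ioi_le_of_intervalIntegral_le {f B : ℝ → ℝ} {p c : ℝ}
    (hf0 : ∀ r ∈ Ioi p, 0 ≤ f r) (hf : ∀ R, IntegrableOn f (Ioc p R))
    (hB : Tendsto B atTop (𝓝 c)) (hle : ∀ᶠ R in atTop, ∫ r in p..R, f r ≤ B R) :
    ∫ r in Ioi p, f r ≤ c := by
  have hint : IntegrableOn f (Ioi p) := by
    refine integrableOn_Ioi_of_intervalIntegral_norm_bounded (c + 1) p hf tendsto_id ?_
    filter_upwards [hle, hB.eventually (eventually_le_nhds (lt_add_one c)),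
      eventually_ge_atTop p] with R hR hBR hpR
    have hnorm : ∫ r in p..R, ‖f r‖ = ∫ r in p..R, f r :=
      intervalIntegral.integral_congr_ae (ae_of_all _ fun r hr =>
        Real.norm_of_nonneg (hf0 r (by rw [uIoc_of_le hpR] at hr; exact hr.1)))
    linarith
  exact le_of_tendsto_of_tendsto (intervalIntegral_tendsto_integral_Ioi p hint tendsto_id) hB hle

section Hardy

variable {F : Type*} [NormedAddCommGroup F] [InnerProductSpace ℝ F]

theorem neg_two_mul_mul_inner_le (t : ℝ) (x y : F) :
    -(2 * t * ⟪x, y⟫) ≤ ‖x‖ ^ 2 / 2 + 2 * (t ^ 2 * ‖y‖ ^ 2) := by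
  have h : -(2 * t * ⟪x, y⟫) ≤ 2 * |t| * (‖x‖ * ‖y‖) := by
    calc -(2 * t * ⟪x, y⟫) ≤ |2 * t * ⟪x, y⟫| := neg_le_abs _
      _ = 2 * |t| * |⟪x, y⟫| := by rw [abs_mul, abs_mul, abs_two]
      _ ≤ 2 * |t| * (‖x‖ * ‖y‖) := by gcongr; exact abs_real_inner_le_norm x y
  nlinarith [sq_nonneg (‖x‖ - 2 * |t| * ‖y‖), sq_abs t]

theorem intervalIntegral_norm_sq_eq {φ φ' : ℝ → F} {p R : ℝ} (hpR : p ≤ R)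
    (hd : ∀ r ∈ Icc p R, HasDerivAt φ (φ' r) r) (hc : ContinuousOn φ' (Icc p R)) :
    ∫ r in p..R, ‖φ r‖ ^ 2 =
      (R - p) * ‖φ R‖ ^ 2 - ∫ r in p..R, 2 * (r - p) * ⟪φ r, φ' r⟫ := by
  have hφ : ContinuousOn φ (Icc p R) := fun r hr => (hd r hr).continuousAt.continuousWithinAt
  have hnorm : IntervalIntegrable (fun r => ‖φ r‖ ^ 2) volume p R :=
    ((hφ.norm.pow 2).mono (uIcc_of_le hpR).subset).intervalIntegrable
  have hcross : IntervalIntegrable (fun r => 2 * (r - p) * ⟪φ r, φ' r⟫) volume p R :=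
    (((continuousOn_const.mul (continuousOn_id.sub continuousOn_const)).mul
      (hφ.inner hc)).mono (uIcc_of_le hpR).subset).intervalIntegrable
  have hftc : ∫ r in p..R, (‖φ r‖ ^ 2 + 2 * (r - p) * ⟪φ r, φ' r⟫) =
      (R - p) * ‖φ R‖ ^ 2 - (p - p) * ‖φ p‖ ^ 2 := by
    refine intervalIntegral.integral_eq_sub_of_hasDerivAt (f := fun r => (r - p) * ‖φ r‖ ^ 2)
      (fun r hr => ?_) (hnorm.add hcross)
    rw [uIcc_of_le hpR] at hr
    exact (((hasDerivAt_id' r).sub_const p).mul (hd r hr).norm_sq).congr_deriv (by ring)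
  rw [intervalIntegral.integral_add hnorm hcross, sub_self, zero_mul, sub_zero] at hftc
  linarith

theorem intervalIntegral_norm_sq_le {φ φ' : ℝ → F} {p R : ℝ} (hpR : p ≤ R)
    (hd : ∀ r ∈ Icc p R, HasDerivAt φ (φ' r) r) (hc : ContinuousOn φ' (Icc p R)) :
    ∫ r in p..R, ‖φ r‖ ^ 2 ≤
      2 * ((R - p) * ‖φ R‖ ^ 2) + 4 * ∫ r in p..R, (r - p) ^ 2 * ‖φ' r‖ ^ 2 := by
  have hφ : ContinuousOn φ (Icc p R) := fun r hr => (hd r hr).continuousAt.continuousWithinAt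
  have hnorm : IntervalIntegrable (fun r => ‖φ r‖ ^ 2) volume p R :=
    ((hφ.norm.pow 2).mono (uIcc_of_le hpR).subset).intervalIntegrable
  have hweight : IntervalIntegrable (fun r => (r - p) ^ 2 * ‖φ' r‖ ^ 2) volume p R :=
    ((((continuousOn_id.sub continuousOn_const).pow 2).mul (hc.norm.pow 2)).mono
      (uIcc_of_le hpR).subset).intervalIntegrable
  have hcross_int : IntervalIntegrable (fun r => 2 * (r - p) * ⟪φ r, φ' r⟫) volume p R :=
    (((continuousOn_const.mul (continuousOn_id.sub continuousOn_const)).mul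
      (hφ.inner hc)).mono (uIcc_of_le hpR).subset).intervalIntegrable
  have hcross : -∫ r in p..R, 2 * (r - p) * ⟪φ r, φ' r⟫ ≤
      (∫ r in p..R, ‖φ r‖ ^ 2) / 2 + 2 * ∫ r in p..R, (r - p) ^ 2 * ‖φ' r‖ ^ 2 := by
    rw [← intervalIntegral.integral_neg, ← intervalIntegral.integral_div,
      ← intervalIntegral.integral_const_mul, ← intervalIntegral.integral_add
        (hnorm.div_const 2) (hweight.const_mul 2)]
    exact intervalIntegral.integral_mono_on hpR hcross_int.neg
      ((hnorm.div_const 2).add (hweight.const_mul 2))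
      fun r _ => neg_two_mul_mul_inner_le (r - p) (φ r) (φ' r)
  rw [intervalIntegral_norm_sq_eq hpR hd hc] at hcross ⊢
  linarith

theorem setIntegral_norm_sq_Ioi_le {φ φ' : ℝ → F} {p : ℝ}
    (hd : ∀ r, p ≤ r → HasDerivAt φ (φ' r) r) (hc : ContinuousOn φ' (Ici p))
    (hlim : Tendsto (fun r => r * ‖φ r‖ ^ 2) atTop (𝓝 0))
    (hint : IntegrableOn (fun r => (r - p) ^ 2 * ‖φ' r‖ ^ 2) (Ioi p)) :
    ∫ r in Ioi p, ‖φ r‖ ^ 2 ≤ 4 * ∫ r in Ioi p, (r - p) ^ 2 * ‖φ' r‖ ^ 2 := by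
  set J := ∫ r in Ioi p, (r - p) ^ 2 * ‖φ' r‖ ^ 2
  have hφ : ContinuousOn φ (Ici p) := fun r hr => (hd r hr).continuousAt.continuousWithinAt
  have hloc : ∀ R, IntegrableOn (fun r => ‖φ r‖ ^ 2) (Ioc p R) := fun R =>
    ((hφ.norm.pow 2).mono Icc_subset_Ici_self).integrableOn_Icc.mono_set Ioc_subset_Icc_self
  have hbound : Tendsto (fun R => 2 * ((R - p) * ‖φ R‖ ^ 2) + 4 * J) atTop (𝓝 (4 * J)) := by
    simpa using ((tendsto_sub_mul_of_tendsto_mul p hlim).const_mul 2).add_const (4 * J)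
  refine setIntegral_Ioi_le_of_intervalIntegral_le (fun r _ => by positivity) hloc hbound ?_
  filter_upwards [eventually_ge_atTop p] with R hpR
  have hJ : ∫ r in p..R, (r - p) ^ 2 * ‖φ' r‖ ^ 2 ≤ J := by
    rw [intervalIntegral.integral_of_le hpR]
    exact setIntegral_mono_set hint (ae_of_all _ fun r => by positivity)
      Ioc_subset_Ioi_self.eventuallyLE
  calc ∫ r in p..R, ‖φ r‖ ^ 2
      ≤ 2 * ((R - p) * ‖φ R‖ ^ 2) + 4 * ∫ r in p..R, (r - p) ^ 2 * ‖φ' r‖ ^ 2 :=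
        intervalIntegral_norm_sq_le hpR (fun r hr => hd r hr.1) (hc.mono Icc_subset_Ici_self)
    _ ≤ 2 * ((R - p) * ‖φ R‖ ^ 2) + 4 * J := by gcongr

end Hardy

theorem sqrt_sq_sub_sq_pos {M a : ℝ} (ha : |a| < M) : 0 < √(M ^ 2 - a ^ 2) :=
  Real.sqrt_pos.2 (by nlinarith [abs_nonneg a, sq_abs a])

theorem sub_rplus_le_mul_muKerr {M a r : ℝ} (ha : |a| < M) (hr : rplus M a ≤ r) :
    r - rplus M a ≤ 4 * M / √(M ^ 2 - a ^ 2) * (muKerr M a r * r) := by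
  set s := √(M ^ 2 - a ^ 2)
  have hs : 0 < s := sqrt_sq_sub_sq_pos ha
  have hs2 : s ^ 2 = M ^ 2 - a ^ 2 := Real.sq_sqrt (by nlinarith [abs_nonneg a, sq_abs a])
  have hrs : M + s ≤ r := hr
  have hM : 0 < M := (abs_nonneg a).trans_lt ha
  have hsM : s ≤ M := by nlinarith [sq_nonneg a]
  have hr0 : 0 < r := by linarith
  have ha2 : a ^ 2 ≤ r ^ 2 := by nlinarith [abs_nonneg a, sq_abs a]
  have hlin : 2 * s * r ≤ 4 * M * (r - M + s) := by nlinarith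
  have hΔ : r ^ 2 - 2 * M * r + a ^ 2 = (r - rplus M a) * (r - M + s) := by
    rw [rplus]; linear_combination hs2
  have hkey : s * (r ^ 2 + a ^ 2) ≤ 4 * M * (r - M + s) * r := by
    nlinarith [mul_le_mul_of_nonneg_right hlin hr0.le]
  have hden : 0 < s * (r ^ 2 + a ^ 2) := by positivity
  calc r - rplus M a
      ≤ (r - rplus M a) * (4 * M * (r - M + s) * r / (s * (r ^ 2 + a ^ 2))) :=
        le_mul_of_one_le_right (by linarith) ((one_le_div hden).2 hkey)
    _ = 4 * M / s * (muKerr M a r * r) := by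
        rw [muKerr, hΔ]; field_simp

theorem hardy_trivial_halfline_general (M a : ℝ) (ha : |a| < M) :
    ∃ C > 0, ∀ (φ φ' : ℝ → ℂ),
      (∀ r, rplus M a ≤ r → HasDerivAt φ (φ' r) r) →
      ContinuousOn φ' (Set.Ici (rplus M a)) →
      Filter.Tendsto (fun r => r * ‖φ r‖^2) Filter.atTop (nhds 0) →
      IntegrableOn (fun r => (muKerr M a r)^2 * r^2 * ‖φ' r‖^2) (Set.Ioi (rplus M a)) →
      (∫ r in Set.Ioi (rplus M a), ‖φ r‖^2)
        ≤ C * ∫ r in Set.Ioi (rplus M a), (muKerr M a r)^2 * r^2 * ‖φ' r‖^2 := by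
  set p := rplus M a
  set C₀ := 4 * M / √(M ^ 2 - a ^ 2)
  have hC₀ : 0 < C₀ := div_pos (by linarith [abs_nonneg a]) (sqrt_sq_sub_sq_pos ha)
  refine ⟨4 * C₀ ^ 2, by positivity, fun φ φ' hd hc hlim hint => ?_⟩
  have hweight : ∀ r ∈ Ioi p,
      (r - p) ^ 2 * ‖φ' r‖ ^ 2 ≤ C₀ ^ 2 * ((muKerr M a r) ^ 2 * r ^ 2 * ‖φ' r‖ ^ 2) := by
    intro r hr
    calc (r - p) ^ 2 * ‖φ' r‖ ^ 2 ≤ (C₀ * (muKerr M a r * r)) ^ 2 * ‖φ' r‖ ^ 2 := by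
          gcongr
          · exact sub_nonneg.2 hr.le
          · exact sub_rplus_le_mul_muKerr ha hr.le
      _ = C₀ ^ 2 * ((muKerr M a r) ^ 2 * r ^ 2 * ‖φ' r‖ ^ 2) := by ring
  have hint' : IntegrableOn (fun r => (r - p) ^ 2 * ‖φ' r‖ ^ 2) (Ioi p) :=
    (hint.const_mul (C₀ ^ 2)).mono'
      ((((continuousOn_id.sub continuousOn_const).pow 2).mul
        ((hc.mono Ioi_subset_Ici_self).norm.pow 2)).aestronglyMeasurable measurableSet_Ioi)
      (ae_restrict_of_forall_mem measurableSet_Ioi fun r hr => by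
        rw [Real.norm_of_nonneg (by positivity)]; exact hweight r hr)
  calc ∫ r in Ioi p, ‖φ r‖ ^ 2 ≤ 4 * ∫ r in Ioi p, (r - p) ^ 2 * ‖φ' r‖ ^ 2 :=
        setIntegral_norm_sq_Ioi_le hd hc hlim hint'
    _ ≤ 4 * ∫ r in Ioi p, C₀ ^ 2 * ((muKerr M a r) ^ 2 * r ^ 2 * ‖φ' r‖ ^ 2) := by
        gcongr 4 * ?_
        exact setIntegral_mono_on hint' (hint.const_mul _) measurableSet_Ioi hweight
    _ = 4 * C₀ ^ 2 * ∫ r in Ioi p, (muKerr M a r) ^ 2 * r ^ 2 * ‖φ' r‖ ^ 2 := by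
        rw [integral_const_mul]; ring

/-- Simple Hardy inequality on the half-line: if `r|φ(r)|² → 0` as `r → ∞` and the
right-hand integral is finite, then
`∫_{r_+}^{∞} |φ|² dr ≤ C ∫_{r_+}^{∞} μ² r² |φ'|² dr` with `C = C(M,a)`. -/
theorem hardy_trivial_halfline (M a : ℝ) (hM : 0 < M) (ha : |a| < M) :
    ∃ C > 0, ∀ (φ φ' : ℝ → ℂ),
      (∀ r, rplus M a ≤ r → HasDerivAt φ (φ' r) r) →
      ContinuousOn φ' (Set.Ici (rplus M a)) →
      Filter.Tendsto (fun r => r * ‖φ r‖^2) Filter.atTop (nhds 0) →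
      IntegrableOn (fun r => (muKerr M a r)^2 * r^2 * ‖φ' r‖^2) (Set.Ioi (rplus M a)) →
      (∫ r in Set.Ioi (rplus M a), ‖φ r‖^2)
        ≤ C * ∫ r in Set.Ioi (rplus M a), (muKerr M a r)^2 * r^2 * ‖φ' r‖^2 :=
  hardy_trivial_halfline_general M a ha
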